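/- The pullback of the flat neutral metric ds² = dZ₁dZ̄₁ - dZ₂dZ̄₂ on ℂ² under the map (μ₁, μ₂) ↦ (Z₁, Z₂), where Z₁ = [(1+μ₂μ̄₂)μ̄₁ + (1+μ₁μ̄₁)μ̄₂ + i((1-μ₂μ̄₂)μ̄₁ - (1-μ₁μ̄₁)μ̄₂)]/(1-μ₁μ̄₁μ₂μ̄₂) and Z₂ = [(1+μ₂μ̄₂)μ̄₁ + (1+μ₁μ̄₁)μ̄₂ - i((1-μ₂μ̄₂)μ̄₁ - (1-μ₁μ̄₁)μ̄₂)]/(1-μ₁μ̄₁μ₂μ̄₂), equals Ω² times the canonical neutral metric on the space of oriented geodesics of hyperbolic 3-space, where Ω = |1+μ₁μ̄₂|²/(1-|μ₁|²|μ₂|²). -/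

import Mathlib

/-
Write `Z = (P + iQ, P - iQ)` with `P = A/D`, `Q = B/D`, where `A ± iB` and `D = 1 - |μ₁|²|μ₂|²`
are the numerators and the (real) denominator of `Z₁`, `Z₂`. Then
`|dZ₁|² - |dZ₂|² = 4 Im(dP · conj dQ)`, and by the quotient rule `dP = (A'D - AD')/D²`,
`dQ = (B'D - BD')/D²`. Comparing imaginary parts through `z - conj z` turns the claim into the
polynomial identity `Im((A'D - AD') · conj(B'D - BD')) = 2 D² Im(v₁ v̄₂ (1 + μ̄₁μ₂)²)` in `μ`, `v`
and their conjugates. On the other side `1/q² = q̄²/|q|⁴` for `q = 1 + μ₁μ̄₂`, so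
`Ω² G̃(v) = 8 Im(v₁ v̄₂ q̄²)/D²`.
-/

open Complex

/-- The conformal coordinate map `(μ₁,μ₂) ↦ (Z₁,Z₂)` on the space of oriented geodesics
of hyperbolic 3-space. -/
noncomputable def geodCoord (μ : ℂ × ℂ) : ℂ × ℂ :=
  let m₁ := μ.1; let m₂ := μ.2
  let den : ℂ := 1 - m₁ * (starRingEnd ℂ) m₁ * m₂ * (starRingEnd ℂ) m₂
  let a : ℂ := (1 + m₂ * (starRingEnd ℂ) m₂) * (starRingEnd ℂ) m₁
    + (1 + m₁ * (starRingEnd ℂ) m₁) * (starRingEnd ℂ) m₂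
  let b : ℂ := (1 - m₂ * (starRingEnd ℂ) m₂) * (starRingEnd ℂ) m₁
    - (1 - m₁ * (starRingEnd ℂ) m₁) * (starRingEnd ℂ) m₂
  ((a + I * b) / den, (a - I * b) / den)

/-- The canonical neutral metric `G̃` on the space of oriented geodesics of `ℍ³`, as a
quadratic form on the tangent space at `μ = (μ₁,μ₂)`:
`G̃(v) = Im(8 v₁ v̄₂ / (1+μ₁μ̄₂)²)`. -/
noncomputable def Gtilde (μ : ℂ × ℂ) (v : ℂ × ℂ) : ℝ :=
  (8 * v.1 * (starRingEnd ℂ) v.2 / (1 + μ.1 * (starRingEnd ℂ) μ.2) ^ 2).im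

/-- The conformal factor `Ω = |1+μ₁μ̄₂|²/(1 − |μ₁|²|μ₂|²)`. -/
noncomputable def confFactor (μ : ℂ × ℂ) : ℝ :=
  Complex.normSq (1 + μ.1 * (starRingEnd ℂ) μ.2) /
    (1 - ‖μ.1‖ ^ 2 * ‖μ.2‖ ^ 2)

open ComplexConjugate

theorem DifferentiableAt.fun_div' {𝕜 𝕜' E : Type*} [NontriviallyNormedField 𝕜]
    [NontriviallyNormedField 𝕜'] [NormedAlgebra 𝕜 𝕜'] [NormedAddCommGroup E] [NormedSpace 𝕜 E]
    {f g : E → 𝕜'} {x : E} (hf : DifferentiableAt 𝕜 f x) (hg : DifferentiableAt 𝕜 g x)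
    (hx : g x ≠ 0) : DifferentiableAt 𝕜 (fun y => f y / g y) x := by
  simpa only [div_eq_mul_inv] using hf.fun_mul (hg.fun_inv hx)

theorem fderiv_fun_div_apply {𝕜 𝕜' E : Type*} [NontriviallyNormedField 𝕜]
    [NontriviallyNormedField 𝕜'] [NormedAlgebra 𝕜 𝕜'] [NormedAddCommGroup E] [NormedSpace 𝕜 E]
    {f g : E → 𝕜'} {x : E} (hf : DifferentiableAt 𝕜 f x) (hg : DifferentiableAt 𝕜 g x)
    (hx : g x ≠ 0) (v : E) :
    fderiv 𝕜 (fun y => f y / g y) x v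
      = (fderiv 𝕜 f x v * g x - f x * fderiv 𝕜 g x v) / g x ^ 2 := by
  have H : HasLineDerivAt 𝕜 (fun y => f y / g y)
      ((fderiv 𝕜 f x v * g x - f x * fderiv 𝕜 g x v) / g x ^ 2) x v := by
    have := (hf.hasFDerivAt.hasLineDerivAt v).fun_div (hg.hasFDerivAt.hasLineDerivAt v)
      (by simpa using hx)
    simp only [zero_smul, add_zero] at this
    exact this
  rw [← (hf.fun_div' hg hx).lineDeriv_eq_fderiv, H.lineDeriv]

theorem fderiv_add_I_mul_prodMk_sub_I_mul_apply {E : Type*} [NormedAddCommGroup E]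
    [NormedSpace ℝ E] {f g : E → ℂ} {x : E} (hf : DifferentiableAt ℝ f x)
    (hg : DifferentiableAt ℝ g x) (v : E) :
    fderiv ℝ (fun y => (f y + I * g y, f y - I * g y)) x v
      = (fderiv ℝ f x v + I * fderiv ℝ g x v, fderiv ℝ f x v - I * fderiv ℝ g x v) := by
  have hIg := hg.hasFDerivAt.const_mul I
  rw [((hf.hasFDerivAt.fun_add hIg).prodMk (hf.hasFDerivAt.fun_sub hIg)).fderiv]
  simp

theorem Complex.normSq_add_I_mul_sub_normSq_sub_I_mul (p q : ℂ) :
    normSq (p + I * q) - normSq (p - I * q) = 4 * (p * conj q).im := by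
  rw [normSq_add, normSq_sub]
  simp only [map_mul, conj_I, normSq_I, one_mul, neg_mul, mul_neg, neg_re, mul_re,
    I_re, I_im, conj_re, conj_im, mul_im]
  ring

theorem Complex.im_eq_mul_im_of_sub_conj_eq {z w : ℂ} {c : ℝ}
    (h : z - conj z = c * (w - conj w)) : z.im = c * w.im := by
  rw [sub_conj, sub_conj] at h
  apply ofReal_injective
  push_cast at h ⊢
  linear_combination (-I / 2) * h + ((z.im : ℂ) - c * w.im) * I_sq

theorem fderiv_conj_apply {E : Type*} [NormedAddCommGroup E] [NormedSpace ℝ E] (f : E → ℂ)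
    (x v : E) : fderiv ℝ (fun y => conj (f y)) x v = conj (fderiv ℝ f x v) := by
  rw [show (fun y => conj (f y)) = fun y => star (f y) from rfl, fderiv_star]
  rfl

namespace GeodCoord

variable (μ v : ℂ × ℂ)

def den : ℂ := 1 - μ.1 * conj μ.1 * μ.2 * conj μ.2

def numP : ℂ := (1 + μ.2 * conj μ.2) * conj μ.1 + (1 + μ.1 * conj μ.1) * conj μ.2

def numQ : ℂ := (1 - μ.2 * conj μ.2) * conj μ.1 - (1 - μ.1 * conj μ.1) * conj μ.2

noncomputable def P : ℂ := numP μ / den μ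

noncomputable def Q : ℂ := numQ μ / den μ

def denDeriv : ℂ :=
  -((v.1 * conj μ.1 + μ.1 * conj v.1) * (μ.2 * conj μ.2)
    + μ.1 * conj μ.1 * (v.2 * conj μ.2 + μ.2 * conj v.2))

def numPDeriv : ℂ :=
  (v.2 * conj μ.2 + μ.2 * conj v.2) * conj μ.1 + (1 + μ.2 * conj μ.2) * conj v.1
    + (v.1 * conj μ.1 + μ.1 * conj v.1) * conj μ.2 + (1 + μ.1 * conj μ.1) * conj v.2

def numQDeriv : ℂ :=
  -(v.2 * conj μ.2 + μ.2 * conj v.2) * conj μ.1 + (1 - μ.2 * conj μ.2) * conj v.1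
    + (v.1 * conj μ.1 + μ.1 * conj v.1) * conj μ.2 - (1 - μ.1 * conj μ.1) * conj v.2

theorem geodCoord_eq : geodCoord = fun μ => (P μ + I * Q μ, P μ - I * Q μ) := by
  ext μ <;> simp [geodCoord, P, Q, numP, numQ, den, add_div, sub_div, mul_div_assoc]

theorem den_eq_ofReal : den μ = ((1 - ‖μ.1‖ ^ 2 * ‖μ.2‖ ^ 2 : ℝ) : ℂ) := by
  push_cast
  rw [← mul_conj', ← mul_conj', den]
  ring

theorem differentiable_den : Differentiable ℝ den := by
  unfold den; fun_prop

theorem differentiable_numP : Differentiable ℝ numP := by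
  unfold numP; fun_prop

theorem differentiable_numQ : Differentiable ℝ numQ := by
  unfold numQ; fun_prop

variable {μ}

theorem fderiv_den_apply : fderiv ℝ den μ v = denDeriv μ v := by
  unfold den
  simp (disch := fun_prop) only [fderiv_fun_sub, fderiv_fun_const, Pi.zero_apply, fderiv_fun_mul,
    fderiv_snd, fderiv_fst, smul_add, zero_sub, neg_add_rev, add_apply, neg_apply, smul_apply,
    ContinuousLinearMap.coe_fst', smul_eq_mul, fderiv_conj_apply, ContinuousLinearMap.coe_snd',
    denDeriv]
  ring

theorem fderiv_numP_apply : fderiv ℝ numP μ v = numPDeriv μ v := by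
  unfold numP
  simp (disch := fun_prop) only [fderiv_fun_add, fderiv_fun_mul, fderiv_fun_const, Pi.zero_apply,
    fderiv_snd, smul_add, fderiv_fst, add_apply, zero_apply, smul_apply, fderiv_conj_apply,
    ContinuousLinearMap.coe_fst', smul_eq_mul, ContinuousLinearMap.coe_snd', numPDeriv]
  ring

theorem fderiv_numQ_apply : fderiv ℝ numQ μ v = numQDeriv μ v := by
  unfold numQ
  simp (disch := fun_prop) only [fderiv_fun_sub, fderiv_fun_mul, fderiv_fun_const, Pi.zero_apply,
    fderiv_snd, zero_sub, neg_add_rev, smul_add, smul_neg, fderiv_fst, sub_apply, add_apply,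
    smul_apply, fderiv_conj_apply, ContinuousLinearMap.coe_fst', smul_eq_mul, neg_apply,
    ContinuousLinearMap.coe_snd', numQDeriv]
  ring

theorem differentiableAt_P (hμ : den μ ≠ 0) : DifferentiableAt ℝ P μ :=
  (differentiable_numP μ).fun_div' (differentiable_den μ) hμ

theorem differentiableAt_Q (hμ : den μ ≠ 0) : DifferentiableAt ℝ Q μ :=
  (differentiable_numQ μ).fun_div' (differentiable_den μ) hμ

theorem fderiv_P_apply (hμ : den μ ≠ 0) :
    fderiv ℝ P μ v = (numPDeriv μ v * den μ - numP μ * denDeriv μ v) / den μ ^ 2 := by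
  change fderiv ℝ (fun μ => numP μ / den μ) μ v = _
  rw [fderiv_fun_div_apply (differentiable_numP μ) (differentiable_den μ) hμ,
    fderiv_numP_apply, fderiv_den_apply]

theorem fderiv_Q_apply (hμ : den μ ≠ 0) :
    fderiv ℝ Q μ v = (numQDeriv μ v * den μ - numQ μ * denDeriv μ v) / den μ ^ 2 := by
  change fderiv ℝ (fun μ => numQ μ / den μ) μ v = _
  rw [fderiv_fun_div_apply (differentiable_numQ μ) (differentiable_den μ) hμ,
    fderiv_numQ_apply, fderiv_den_apply]

theorem four_mul_im_fderiv_P_mul_conj_fderiv_Q (hμ : den μ ≠ 0) :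
    4 * (fderiv ℝ P μ v * conj (fderiv ℝ Q μ v)).im
      = 8 * (v.1 * conj v.2 * (1 + conj μ.1 * μ.2) ^ 2).im / (1 - ‖μ.1‖ ^ 2 * ‖μ.2‖ ^ 2) ^ 2 := by
  rw [fderiv_P_apply v hμ, fderiv_Q_apply v hμ]
  set NP := numPDeriv μ v * den μ - numP μ * denDeriv μ v
  set NQ := numQDeriv μ v * den μ - numQ μ * denDeriv μ v
  set W := v.1 * conj v.2 * (1 + conj μ.1 * μ.2) ^ 2
  set d := 1 - ‖μ.1‖ ^ 2 * ‖μ.2‖ ^ 2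
  have hden : den μ = d := den_eq_ofReal μ
  have hd : d ≠ 0 := by rw [hden] at hμ; exact_mod_cast hμ
  have key : NP * conj NQ - conj (NP * conj NQ) = ((2 * d ^ 2 : ℝ) : ℂ) * (W - conj W) := by
    rw [ofReal_mul, ofReal_pow, ofReal_ofNat, ← hden]
    simp only [NP, NQ, W, numPDeriv, numQDeriv, numP, numQ, denDeriv, den, map_add, map_sub,
      map_mul, map_neg, map_one, map_pow, conj_conj]
    ring
  rw [hden, map_div₀, map_pow, conj_ofReal, div_mul_div_comm, ← ofReal_pow, ← ofReal_mul,
    div_ofReal_im, im_eq_mul_im_of_sub_conj_eq key]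
  field_simp
  ring

end GeodCoord

theorem confFactor_sq_mul_Gtilde (μ v : ℂ × ℂ) (hq : 1 + μ.1 * conj μ.2 ≠ 0) :
    confFactor μ ^ 2 * Gtilde μ v
      = 8 * (v.1 * conj v.2 * (1 + conj μ.1 * μ.2) ^ 2).im / (1 - ‖μ.1‖ ^ 2 * ‖μ.2‖ ^ 2) ^ 2 := by
  rw [confFactor, Gtilde]
  set q := 1 + μ.1 * conj μ.2
  have hqc : 1 + conj μ.1 * μ.2 = conj q := by simp [q]
  have hG : 8 * v.1 * conj v.2 / q ^ 2
      = 8 * (v.1 * conj v.2 * conj q ^ 2) / ((normSq q ^ 2 : ℝ) : ℂ) := by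
    have : conj q ≠ 0 := (map_ne_zero _).mpr hq
    rw [ofReal_pow, normSq_eq_conj_mul_self]
    field_simp
  have hn : normSq q ≠ 0 := normSq_eq_zero.not.mpr hq
  rw [hqc, hG, div_ofReal_im, mul_im, re_ofNat, im_ofNat, zero_mul, add_zero]
  field_simp

theorem pullback_flat_eq_conf_neutral
    (μ : ℂ × ℂ) (h : ‖μ.1‖ * ‖μ.2‖ < 1) (v : ℂ × ℂ) :
    Complex.normSq ((fderiv ℝ geodCoord μ v).1)
      - Complex.normSq ((fderiv ℝ geodCoord μ v).2)
    = (confFactor μ) ^ 2 * Gtilde μ v := by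
  have hden : GeodCoord.den μ ≠ 0 := by
    rw [GeodCoord.den_eq_ofReal, ofReal_ne_zero]
    nlinarith [mul_nonneg (norm_nonneg μ.1) (norm_nonneg μ.2)]
  have hq : 1 + μ.1 * conj μ.2 ≠ 0 := by
    intro h0
    have : ‖μ.1 * conj μ.2‖ = 1 := by rw [eq_neg_of_add_eq_zero_right h0, norm_neg, norm_one]
    rw [norm_mul, norm_conj] at this
    linarith
  rw [GeodCoord.geodCoord_eq, fderiv_add_I_mul_prodMk_sub_I_mul_apply
    (GeodCoord.differentiableAt_P hden) (GeodCoord.differentiableAt_Q hden),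
    normSq_add_I_mul_sub_normSq_sub_I_mul,
    GeodCoord.four_mul_im_fderiv_P_mul_conj_fderiv_Q v hden, confFactor_sq_mul_Gtilde μ v hq]
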